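/- Let Z = (E, G, τ, σ) be a zip datum and x ∈ G. Consider the action of E_∞^x on E × G_∞^x given by ε.(e, g) = (eε⁻¹, τ(ε) g ˣσ(ε)⁻¹), and the map π : E × G_∞^x → o_Z(x), (e, g) ↦ τ(e) g x σ(e)⁻¹. Then π is surjective, constant on E_∞^x-orbits, and for any (e, g), (ẽ, g̃) with π(e, g) = π(ẽ, g̃) there is a unique ε ∈ E_∞^x with (ẽ, g̃) = ε.(e, g); i.e. π is an E_∞^x-torsor over the equivalence class o_Z(x). -/
import Mathlib


variable {E G : Type*} [Group E] [Group G]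

/-- The conjugated homomorphism ˣσ : e ↦ x σ(e) x⁻¹. -/
def conjHom (x : G) (σ : E →* G) : E →* G :=
  ((MulAut.conj x).toMonoidHom).comp σ

/-- The first refinement group E₁ = σ⁻¹(τ(E)). -/
def Eone (τ σ : E →* G) : Subgroup E :=
  Subgroup.comap σ (Subgroup.map τ ⊤)

/-- E₁ˣ = (ˣσ)⁻¹(τ(E)). -/
def EoneX (τ σ : E →* G) (x : G) : Subgroup E :=
  Eone τ (conjHom x σ)

/-- The iterated refinements Eᵢ. -/
def Eseq (τ σ : E →* G) : ℕ → Subgroup E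
  | 0 => ⊤
  | n + 1 => Subgroup.comap σ (Subgroup.map τ (Eseq τ σ n))

/-- The iterated refinements Gᵢ. -/
def Gseq (τ σ : E →* G) : ℕ → Subgroup G
  | 0 => ⊤
  | n + 1 => Subgroup.map τ (Eseq τ σ n)

/-- E∞: the largest subgroup F of E with σ(F) ⊆ τ(F). -/
def Einf (τ σ : E →* G) : Subgroup E :=
  sSup {F : Subgroup E | Subgroup.map σ F ≤ Subgroup.map τ F}

/-- G∞ = τ(E∞). -/
def Ginf (τ σ : E →* G) : Subgroup G :=
  Subgroup.map τ (Einf τ σ)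

/-- E∞ˣ: the largest subgroup F of E with ˣσ(F) ⊆ τ(F). -/
def EinfX (τ σ : E →* G) (x : G) : Subgroup E :=
  Einf τ (conjHom x σ)

/-- G∞ˣ = τ(E∞ˣ). -/
def GinfX (τ σ : E →* G) (x : G) : Subgroup G :=
  Subgroup.map τ (EinfX τ σ x)

/-- The ∼_Z-equivalence class of x : all τ(e) g x σ(e)⁻¹ with e ∈ E, g ∈ G∞ˣ. -/
def zipOrbit (τ σ : E →* G) (x : G) : Set G :=
  {y | ∃ e : E, ∃ g ∈ GinfX τ σ x, y = τ e * g * x * (σ e)⁻¹}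

lemma conjHom_apply (x : G) (σ : E →* G) (e : E) : conjHom x σ e = x * σ e * x⁻¹ := rfl

lemma map_einf_le (τ σ : E →* G) :
    Subgroup.map σ (Einf τ σ) ≤ Subgroup.map τ (Einf τ σ) := by
  rw [Einf, (Subgroup.gc_map_comap σ).l_sSup]
  refine iSup₂_le fun F hF => hF.trans (Subgroup.map_mono (le_sSup hF))

lemma mem_einf (τ σ : E →* G) (ε : E) (a b : G) (ha : a ∈ Ginf τ σ) (hb : b ∈ Ginf τ σ)
    (h : σ ε = a * τ ε * b) : ε ∈ Einf τ σ := by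
  set F : Subgroup E := Subgroup.closure ((Einf τ σ : Set E) ∪ {ε}) with hFdef
  have hle : Einf τ σ ≤ F := fun y hy => Subgroup.subset_closure (Or.inl hy)
  have hεF : ε ∈ F := Subgroup.subset_closure (Or.inr rfl)
  have hGF : Subgroup.map τ (Einf τ σ) ≤ Subgroup.map τ F := Subgroup.map_mono hle
  have hprop : Subgroup.map σ F ≤ Subgroup.map τ F := by
    rw [hFdef, MonoidHom.map_closure, Subgroup.closure_le]
    rintro y ⟨z, hz | hz, rfl⟩
    · exact hGF (map_einf_le τ σ ⟨z, hz, rfl⟩)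
    · rcases hz with rfl
      rw [h]
      exact mul_mem (mul_mem (hGF ha) ⟨_, hεF, rfl⟩) (hGF hb)
  have hF : F ∈ {F : Subgroup E | Subgroup.map σ F ≤ Subgroup.map τ F} := hprop
  exact le_sSup hF hεF

lemma tau_mem_ginfX (τ σ : E →* G) (x : G) {ε : E} (h : ε ∈ EinfX τ σ x) :
    τ ε ∈ GinfX τ σ x := ⟨ε, h, rfl⟩

lemma conj_mem_ginfX (τ σ : E →* G) (x : G) {ε : E} (h : ε ∈ EinfX τ σ x) :
    conjHom x σ ε ∈ GinfX τ σ x :=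
  map_einf_le τ (conjHom x σ) ⟨ε, h, rfl⟩

/-- the map (e, g) ↦ τ(e) g x σ(e)⁻¹ is an E∞ˣ-torsor over o_Z(x):
it is surjective, E∞ˣ-invariant for the action ε.(e,g) = (eε⁻¹, τ(ε) g ˣσ(ε)⁻¹), and any
two preimages of the same point differ by a unique ε ∈ E∞ˣ. -/
theorem zip_orbit_torsor (τ σ : E →* G) (x : G) :
    (∀ e : E, ∀ g ∈ GinfX τ σ x, τ e * g * x * (σ e)⁻¹ ∈ zipOrbit τ σ x) ∧
    (∀ w ∈ zipOrbit τ σ x, ∃ e : E, ∃ g ∈ GinfX τ σ x, w = τ e * g * x * (σ e)⁻¹) ∧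
    (∀ (e : E), ∀ g ∈ GinfX τ σ x, ∀ ε ∈ EinfX τ σ x,
      τ ε * g * (conjHom x σ ε)⁻¹ ∈ GinfX τ σ x ∧
      τ (e * ε⁻¹) * (τ ε * g * (conjHom x σ ε)⁻¹) * x * (σ (e * ε⁻¹))⁻¹ =
        τ e * g * x * (σ e)⁻¹) ∧
    (∀ (e et : E), ∀ g ∈ GinfX τ σ x, ∀ gt ∈ GinfX τ σ x,
      τ e * g * x * (σ e)⁻¹ = τ et * gt * x * (σ et)⁻¹ →
      ∃! ε : E, ε ∈ EinfX τ σ x ∧ et = e * ε⁻¹ ∧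
        gt = τ ε * g * (conjHom x σ ε)⁻¹) := by
  refine ⟨fun e g hg => ⟨e, g, hg, rfl⟩, fun w hw => hw, ?_, ?_⟩
  · intro e g hg ε hε
    refine ⟨mul_mem (mul_mem (tau_mem_ginfX τ σ x hε) hg)
      (inv_mem (conj_mem_ginfX τ σ x hε)), ?_⟩
    simp only [conjHom_apply, map_mul, map_inv]
    group
  · intro e et g hg gt hgt heq
    have key : conjHom x σ (et⁻¹ * e) = gt⁻¹ * τ (et⁻¹ * e) * g := by
      simp only [conjHom_apply, map_mul, map_inv]
      have : gt = (τ et)⁻¹ * (τ e * g * x * (σ e)⁻¹) * σ et * x⁻¹ := by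
        rw [heq]; group
      rw [this]; group
    have hεmem : et⁻¹ * e ∈ EinfX τ σ x :=
      mem_einf τ (conjHom x σ) _ gt⁻¹ g (inv_mem hgt) hg key
    refine ⟨et⁻¹ * e, ⟨hεmem, by group, ?_⟩, ?_⟩
    · rw [key]
      have : gt⁻¹ * gt = 1 := inv_mul_cancel gt
      group
    · rintro ε' ⟨-, h1, -⟩
      have : ε' = (e⁻¹ * et)⁻¹ := by
        rw [h1]; group
      rw [this]; group
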